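/- arXiv:1505.08033 — 2 statements merged into one kernel-verified Lean document; each statement's English description precedes it below -/
import Mathlib

section
/- Let n ≥ 2, let x = (x₁,…,x_d) ∈ C_{n-1}ᵈ, and let ℓ ≥ n. If t_ℓ(x_i) ∈ {1,2} for each 1 ≤ i ≤ d, then (T^{×d})^{h_ℓ+1} x ∈ C_nᵈ. -/
open MeasureTheory Set
open scoped ENNReal NNReal Classical

noncomputable section

/-- Heights of the towers of the infinite Chacon transformation
(tower `0` is `[0,1)` with a single level, so `chaconH 1 = 8`). -/
def chaconH : ℕ → ℕ
  | 0 => 1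
  | n + 1 => 2 * (3 * chaconH n + 1)

/-- Left endpoint of level `k` of tower `n`.  At step `n+1`, tower `n` (which fills
`[0, hₙ·3⁻ⁿ)`) is cut into three subcolumns of equal width; one spacer is added above the
middle subcolumn and `3hₙ+1` spacers above the third one, the spacers being taken
successively as the leftmost intervals of length `3⁻⁽ⁿ⁺¹⁾` in the unused part of `ℝ₊`;
then the three subcolumns are stacked left under right. -/
def chaconL : ℕ → ℕ → ℝ
  | 0, _ => 0
  | n + 1, k =>
      if k < chaconH n then chaconL n k
      else if k < 2 * chaconH n then chaconL n (k - chaconH n) + (3 : ℝ)⁻¹ ^ (n + 1)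
      else if k = 2 * chaconH n then (chaconH n : ℝ) * (3 : ℝ)⁻¹ ^ n
      else if k ≤ 3 * chaconH n then
        chaconL n (k - 2 * chaconH n - 1) + 2 * (3 : ℝ)⁻¹ ^ (n + 1)
      else (chaconH n : ℝ) * (3 : ℝ)⁻¹ ^ n
        + ((k : ℝ) - 3 * (chaconH n : ℝ)) * (3 : ℝ)⁻¹ ^ (n + 1)

/-- Level `k` of tower `n`: an interval of length `3⁻ⁿ`, closed to the left and open to
the right. -/
def chaconLevel (n k : ℕ) : Set ℝ := Ico (chaconL n k) (chaconL n k + (3 : ℝ)⁻¹ ^ n)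

/-- The Chacon transformation on `ℝ`: each point of a non-top level of some tower is sent
to the point directly above it (the value does not depend on the choice of the tower). -/
def chaconT0 (x : ℝ) : ℝ :=
  if h : ∃ p : ℕ × ℕ, p.2 + 1 < chaconH p.1 ∧ x ∈ chaconLevel p.1 p.2 then
    x - chaconL h.choose.1 h.choose.2 + chaconL h.choose.1 (h.choose.2 + 1)
  else x

/-- The inverse of the Chacon transformation on `ℝ`. -/
def chaconT0inv (x : ℝ) : ℝ :=
  if h : ∃ p : ℕ × ℕ, p.2 + 1 < chaconH p.1 ∧ x ∈ chaconLevel p.1 (p.2 + 1) then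
    x - chaconL h.choose.1 (h.choose.2 + 1) + chaconL h.choose.1 h.choose.2
  else x

/-- The space `X = ℝ₊`. -/
abbrev ChaconX : Type := ↥(Set.Ici (0 : ℝ))

/-- The infinite Chacon transformation `T` on `X = ℝ₊`. -/
def chaconT (x : ChaconX) : ChaconX :=
  ⟨max 0 (chaconT0 (x : ℝ)), Set.mem_Ici.mpr (le_max_left 0 _)⟩

/-- The inverse `T⁻¹` of the Chacon transformation on `X = ℝ₊`. -/
def chaconTinv (x : ChaconX) : ChaconX :=
  ⟨max 0 (chaconT0inv (x : ℝ)), Set.mem_Ici.mpr (le_max_left 0 _)⟩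

/-- Integer powers `T^j` of the Chacon transformation. -/
def chaconTZ (j : ℤ) : ChaconX → ChaconX :=
  if 0 ≤ j then chaconT^[j.toNat] else chaconTinv^[(-j).toNat]

/-- Lebesgue measure `μ` on `X = ℝ₊`. -/
def chaconMu : Measure ChaconX := volume.comap Subtype.val

/-- `C n`: the bottom half of tower `n` (its lowest `hₙ/2` levels), as a subset of `X`. -/
def chaconC (n : ℕ) : Set ChaconX :=
  {x | ∃ k, k < chaconH n / 2 ∧ (x : ℝ) ∈ chaconLevel n k}

/-- `tₙ x ∈ {1,2,3}`: the subcolumn of tower `n` containing `x`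
(junk value `0` if `x` is not in tower `n`). -/
def chaconTn (n : ℕ) (x : ChaconX) : ℕ :=
  if h : ∃ k, k < chaconH n ∧ (x : ℝ) ∈ chaconLevel n k then
    1 + (⌊((x : ℝ) - chaconL n h.choose) * (3 : ℝ) ^ (n + 1)⌋).toNat
  else 0

/-- The Cartesian power `T^{×ι}` of the Chacon transformation, acting coordinatewise. -/
def chaconTd (ι : Type) (x : ι → ChaconX) : ι → ChaconX := fun i => chaconT (x i)

/-- Integer powers `(T^{×ι})^j`, acting coordinatewise. -/
def chaconTdZ (ι : Type) (j : ℤ) (x : ι → ChaconX) : ι → ChaconX := fun i => chaconTZ j (x i)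

/-- `Cₙ^ι ⊆ X^ι`. -/
def chaconCd (ι : Type) (n : ℕ) : Set (ι → ChaconX) := {x | ∀ i, x i ∈ chaconC n}

/-- An `n`-box: a Cartesian product of levels of `C n`. -/
def IsNBox (ι : Type) (n : ℕ) (B : Set (ι → ChaconX)) : Prop :=
  ∃ k : ι → ℕ, (∀ i, k i < chaconH n / 2) ∧
    B = {x : ι → ChaconX | ∀ i, ((x i : ℝ)) ∈ chaconLevel n (k i)}

/-- An `n`-diagonal: a maximal finite family of `n`-boxes `B, T^{×d}B, …, (T^{×d})^ℓ B`,
regarded as the union of its boxes. -/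
def IsNDiagonal (ι : Type) (n : ℕ) (D : Set (ι → ChaconX)) : Prop :=
  ∃ (B : Set (ι → ChaconX)) (ℓ : ℕ),
    (∀ j : ℕ, j ≤ ℓ → IsNBox ι n (chaconTdZ ι (j : ℤ) '' B)) ∧
    ¬ chaconTdZ ι (-1) '' B ⊆ chaconCd ι n ∧
    ¬ chaconTdZ ι ((ℓ : ℤ) + 1) '' B ⊆ chaconCd ι n ∧
    D = ⋃ j ∈ Finset.range (ℓ + 1), chaconTdZ ι (j : ℤ) '' B

/-- A measure is boundedly finite if bounded (measurable) sets have finite measure. -/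
def BoundedlyFinite {α : Type*} [MeasurableSpace α] [PseudoMetricSpace α]
    (σ : Measure α) : Prop :=
  ∀ A : Set α, MeasurableSet A → Bornology.IsBounded A → σ A < ⊤

/-- Diagonal measures on `X^ι`: boundedly finite, `T^{×ι}`-invariant measures which are,
for every large enough `n`, concentrated on a single `n`-diagonal inside `Cₙ^ι`. -/
def IsDiagonalMeasure (ι : Type) [Fintype ι] (σ : Measure (ι → ChaconX)) : Prop :=
  BoundedlyFinite σ ∧ σ.map (chaconTd ι) = σ ∧
    ∃ n₀ : ℕ, 1 ≤ n₀ ∧ ∀ n, n₀ ≤ n →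
      ∃ D : Set (ι → ChaconX), IsNDiagonal ι n D ∧ σ (chaconCd ι n \ D) = 0

/-- A wandering set for the `ℤ`-action `Uz`. -/
def ZWandering {α : Type*} (Uz : ℤ → α → α) (W : Set α) : Prop :=
  ∀ j k : ℤ, j ≠ k → Disjoint (Uz j '' W) (Uz k '' W)

/-- Conservativity: every measurable wandering set is null. -/
def ZConservative {α : Type*} [MeasurableSpace α] (σ : Measure α) (Uz : ℤ → α → α) : Prop :=
  ∀ W : Set α, MeasurableSet W → ZWandering Uz W → σ W = 0

/-- Total dissipativity: mod `σ`, the space is the disjoint union of the iterates of a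
wandering set. -/
def ZTotallyDissipative {α : Type*} [MeasurableSpace α] (σ : Measure α)
    (Uz : ℤ → α → α) : Prop :=
  ∃ W : Set α, MeasurableSet W ∧ ZWandering Uz W ∧ σ ((⋃ j : ℤ, Uz j '' W)ᶜ) = 0

/-- Ergodicity of a (not necessarily finite) invariant measure: every invariant
measurable set is null or conull. -/
def MeasErgodic {α : Type*} [MeasurableSpace α] (σ : Measure α) (U : α → α) : Prop :=
  ∀ A : Set α, MeasurableSet A → U ⁻¹' A = A → σ A = 0 ∨ σ Aᶜ = 0

/-- `Icc a b` is an `n`-crossing for `x`: a maximal finite set of consecutive integers `j`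
with `(T^{×ι})^j x ∈ Cₙ^ι`. -/
def IsCrossing (ι : Type) (n : ℕ) (x : ι → ChaconX) (a b : ℤ) : Prop :=
  a ≤ b ∧ (∀ j : ℤ, a ≤ j → j ≤ b → chaconTdZ ι j x ∈ chaconCd ι n) ∧
    chaconTdZ ι (a - 1) x ∉ chaconCd ι n ∧ chaconTdZ ι (b + 1) x ∉ chaconCd ι n

/-- `n(x)`: the smallest `n ≥ 1` with `x ∈ Cₙ^ι`. -/
def chaconNOf (ι : Type) (x : ι → ChaconX) : ℕ :=
  if h : ∃ n : ℕ, 1 ≤ n ∧ x ∈ chaconCd ι n then Nat.find h else 0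

/-- `B(τ)`: the points of `B` whose coordinate `i` lies in subcolumn `τ i` of tower `n`. -/
def chaconBoxTau (ι : Type) (n : ℕ) (B : Set (ι → ChaconX)) (τ : ι → ℕ) :
    Set (ι → ChaconX) :=
  {x ∈ B | ∀ i, chaconTn n (x i) = τ i}

/-- The transition from the `n`-diagonal `D` to the `(n+1)`-diagonal `D'` is the central
one, i.e. `D' = D(1,…,1)`. -/
def CentralTransition (ι : Type) (n : ℕ) (D D' : Set (ι → ChaconX)) : Prop :=
  ∀ B : Set (ι → ChaconX), IsNBox ι n B → B ⊆ D →
    chaconBoxTau ι n B (fun _ => 1) ⊆ D'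

/-- The `n`-diagonal containing a given set (junk value `∅` if there is none). -/
def diagOfBox (ι : Type) (n : ℕ) (B : Set (ι → ChaconX)) : Set (ι → ChaconX) :=
  if h : ∃ D, IsNDiagonal ι n D ∧ B ⊆ D then h.choose else ∅

/-- `D(τ)`: the `(n+1)`-diagonal containing `B(τ)` for an `n`-box `B ⊆ D`. -/
def diagTau (ι : Type) (n : ℕ) (D : Set (ι → ChaconX)) (τ : ι → ℕ) : Set (ι → ChaconX) :=
  if h : ∃ B, IsNBox ι n B ∧ B ⊆ D then diagOfBox ι (n + 1) (chaconBoxTau ι n h.choose τ)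
  else ∅

/-- A consistent family of diagonals `(Dₙ)_{n ≥ n₀}`. -/
def IsConsistentFamily (ι : Type) (n₀ : ℕ) (D : ℕ → Set (ι → ChaconX)) : Prop :=
  (∀ n, n₀ ≤ n → IsNDiagonal ι n (D n)) ∧
    (chaconCd ι (n₀ - 1) ∩ ⋂ n, ⋂ (_ : n₀ ≤ n), D n).Nonempty ∧
    ∀ n, n₀ ≤ n → D (n + 1) ∩ chaconCd ι n ⊆ D n

/-- `x` is seen by the family of diagonals `(Dₙ)_{n ≥ n₀}`. -/
def SeenByFam (ι : Type) (n₀ : ℕ) (D : ℕ → Set (ι → ChaconX)) (x : ι → ChaconX) : Prop :=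
  ∀ n, n₀ ≤ n → x ∉ chaconCd ι n ∨ x ∈ D n

/-- Graph joinings arising from powers of `T`:
`σ(A₁ × ⋯ × A_d) = α μ(T^{-k₁}A₁ ∩ ⋯ ∩ T^{-k_d}A_d)` for some `0 < α < ∞`. -/
def IsGraphJoining (ι : Type) [Fintype ι] (σ : Measure (ι → ChaconX)) : Prop :=
  ∃ (α : ℝ≥0∞) (k : ι → ℤ), 0 < α ∧ α ≠ ⊤ ∧
    ∀ A : ι → Set ChaconX, (∀ i, MeasurableSet (A i)) →
      σ (Set.univ.pi A) = α * chaconMu (⋂ i, chaconTZ (k i) ⁻¹' A i)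

/-- Ergodic components of `σ`: the nonzero boundedly finite `T^{×ι}`-invariant ergodic
measures, absolutely continuous with respect to `σ`, which appear in its ergodic
decomposition. -/
def IsErgodicComponent (ι : Type) [Fintype ι] (σ ρ : Measure (ι → ChaconX)) : Prop :=
  ρ ≠ 0 ∧ BoundedlyFinite ρ ∧ ρ.map (chaconTd ι) = ρ ∧ MeasErgodic ρ (chaconTd ι) ∧ ρ ≪ σ

end

namespace ChaconAux

lemma H_succ (n : ℕ) : chaconH (n+1) = 2*(3*chaconH n + 1) := rfl

lemma H_pos (n : ℕ) : 0 < chaconH n := by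
  induction n with
  | zero => simp [chaconH]
  | succ n ih => rw [H_succ]; omega

lemma H_ge8 {n : ℕ} (h : 1 ≤ n) : 8 ≤ chaconH n := by
  induction n with
  | zero => omega
  | succ n ih =>
    rcases Nat.eq_zero_or_pos n with rfl | hn
    · simp [H_succ, chaconH]
    · have := ih hn; rw [H_succ]; omega

def Lint : ℕ → ℕ → ℕ
  | 0, _ => 0
  | n+1, k =>
    if k < chaconH n then 3 * Lint n k
    else if k < 2 * chaconH n then 3 * Lint n (k - chaconH n) + 1
    else if k = 2 * chaconH n then 3 * chaconH n
    else if k ≤ 3 * chaconH n then 3 * Lint n (k - 2 * chaconH n - 1) + 2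
    else k

lemma Lint_lt : ∀ n k, k < chaconH n → Lint n k < chaconH n := by
  intro n
  induction n with
  | zero => intro k hk; simp [chaconH] at hk; simp [Lint, hk, chaconH]
  | succ n ih =>
    intro k hk
    have hh := H_pos n
    rw [H_succ] at hk ⊢
    simp only [Lint]
    split_ifs with h1 h2 h3 h4
    · have := ih k h1; omega
    · have := ih (k - chaconH n) (by omega); omega
    · omega
    · have := ih (k - 2*chaconH n - 1) (by omega); omega
    · omega

lemma Lint_cases (n k : ℕ) :
    (∃ p, p < chaconH n ∧ k = p ∧ Lint (n+1) k = 3 * Lint n p) ∨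
    (∃ p, p < chaconH n ∧ k = chaconH n + p ∧ Lint (n+1) k = 3 * Lint n p + 1) ∨
    (k = 2 * chaconH n ∧ Lint (n+1) k = 3 * chaconH n) ∨
    (∃ p, p < chaconH n ∧ k = 2 * chaconH n + 1 + p ∧ Lint (n+1) k = 3 * Lint n p + 2) ∨
    (3 * chaconH n < k ∧ Lint (n+1) k = k) := by
  have hh := H_pos n
  simp only [Lint]
  split_ifs with h1 h2 h3 h4
  · exact Or.inl ⟨k, h1, rfl, rfl⟩
  · exact Or.inr (Or.inl ⟨k - chaconH n, by omega, by omega, rfl⟩)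
  · exact Or.inr (Or.inr (Or.inl ⟨h3, rfl⟩))
  · exact Or.inr (Or.inr (Or.inr (Or.inl ⟨k - 2*chaconH n - 1, by omega, by omega, rfl⟩)))
  · exact Or.inr (Or.inr (Or.inr (Or.inr ⟨by omega, rfl⟩)))

lemma Lint_inj : ∀ n k k', k < chaconH n → k' < chaconH n → Lint n k = Lint n k' → k = k' := by
  intro n
  induction n with
  | zero => intro k k' hk hk' _; simp [chaconH] at hk hk'; omega
  | succ n ih =>
    intro k k' hk hk' he
    rcases Lint_cases n k with ⟨p, hp, hkp, e1⟩|⟨p, hp, hkp, e1⟩|⟨e0, e1⟩|⟨p, hp, hkp, e1⟩|⟨h1, e1⟩ <;>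
      rcases Lint_cases n k' with ⟨q, hq, hkq, e2⟩|⟨q, hq, hkq, e2⟩|⟨e0', e2⟩|⟨q, hq, hkq, e2⟩|⟨h2, e2⟩ <;>
      rw [e1, e2] at he
    all_goals try (have bp := Lint_lt n p hp)
    all_goals try (have bq := Lint_lt n q hq)
    all_goals try omega
    all_goals (have hpq : p = q := ih p q hp hq (by omega); omega)

lemma pow_inv_succ (n : ℕ) : (3:ℝ)⁻¹ ^ n = 3 * (3:ℝ)⁻¹ ^ (n+1) := by
  rw [pow_succ]; ring

lemma L_eq : ∀ n k, chaconL n k = (Lint n k : ℝ) * (3:ℝ)⁻¹ ^ n := by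
  intro n
  induction n with
  | zero => intro k; simp [chaconL, Lint]
  | succ n ih =>
    intro k
    have h3 := pow_inv_succ n
    simp only [chaconL, Lint]
    split_ifs with h1 h2 h4 h5
    · rw [ih]; push_cast; rw [h3]; ring
    · rw [ih]; push_cast; rw [h3]; ring
    · push_cast; rw [h3]; ring
    · rw [ih]; push_cast; rw [h3]; ring
    · push_cast; rw [h3]; ring

lemma L_nonneg (n k : ℕ) : 0 ≤ chaconL n k := by
  rw [L_eq]; positivity

lemma mem_level {n k : ℕ} {x : ℝ} :
    x ∈ chaconLevel n k ↔ chaconL n k ≤ x ∧ x < chaconL n k + (3:ℝ)⁻¹ ^ n := by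
  simp [chaconLevel]

lemma level_unique {n j j' : ℕ} {x : ℝ} (hj : j < chaconH n) (hj' : j' < chaconH n)
    (h1 : x ∈ chaconLevel n j) (h2 : x ∈ chaconLevel n j') : j = j' := by
  rw [mem_level, L_eq] at h1 h2
  have hu : (0:ℝ) < (3:ℝ)⁻¹ ^ n := by positivity
  apply Lint_inj n j j' hj hj'
  rcases Nat.lt_trichotomy (Lint n j) (Lint n j') with h | h | h
  · exfalso
    have hc : ((Lint n j:ℝ) + 1) ≤ (Lint n j' : ℝ) := by exact_mod_cast h
    have := mul_le_mul_of_nonneg_right hc hu.le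
    have h12 := h1.2; have h21 := h2.1
    nlinarith
  · exact h
  · exfalso
    have hc : ((Lint n j':ℝ) + 1) ≤ (Lint n j : ℝ) := by exact_mod_cast h
    have := mul_le_mul_of_nonneg_right hc hu.le
    have h22 := h2.2; have h11 := h1.1
    nlinarith

lemma lt_tower_bound {n m : ℕ} {x : ℝ} (hm : m < chaconH n) (hx : x ∈ chaconLevel n m) :
    x < (chaconH n : ℝ) * (3:ℝ)⁻¹ ^ n := by
  rw [mem_level, L_eq] at hx
  have hu : (0:ℝ) < (3:ℝ)⁻¹ ^ n := by positivity
  have hc : ((Lint n m : ℝ) + 1) ≤ (chaconH n : ℝ) := by exact_mod_cast Lint_lt n m hm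
  have := mul_le_mul_of_nonneg_right hc hu.le
  have h2 := hx.2
  nlinarith

lemma tower_grow (n : ℕ) : ∀ ℓ, n ≤ ℓ →
    (chaconH n : ℝ) * (3:ℝ)⁻¹ ^ n ≤ (chaconH ℓ : ℝ) * (3:ℝ)⁻¹ ^ ℓ := by
  intro ℓ hℓ
  induction ℓ, hℓ using Nat.le_induction with
  | base => exact le_rfl
  | succ ℓ hle ih =>
    refine ih.trans ?_
    have h3 := pow_inv_succ ℓ
    have hH : (chaconH (ℓ+1) : ℝ) = 6*(chaconH ℓ : ℝ) + 2 := by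
      rw [H_succ]; push_cast; ring
    have hu : (0:ℝ) < (3:ℝ)⁻¹ ^ (ℓ+1) := by positivity
    have hh : (0:ℝ) ≤ (chaconH ℓ : ℝ) := Nat.cast_nonneg _
    rw [hH, h3]
    nlinarith

lemma L_succ_lt {n k : ℕ} (h : k < chaconH n) : chaconL (n+1) k = chaconL n k := by
  simp only [chaconL]; rw [if_pos h]

lemma L_succ_mid {n k : ℕ} (h : k < chaconH n) :
    chaconL (n+1) (chaconH n + k) = chaconL n k + (3:ℝ)⁻¹ ^ (n+1) := by
  have hh := H_pos n
  simp only [chaconL]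
  rw [if_neg (by omega), if_pos (by omega), show chaconH n + k - chaconH n = k from by omega]

lemma L_succ_third {n k : ℕ} (h : k < chaconH n) :
    chaconL (n+1) (2*chaconH n + 1 + k) = chaconL n k + 2*(3:ℝ)⁻¹ ^ (n+1) := by
  have hh := H_pos n
  simp only [chaconL]
  rw [if_neg (by omega), if_neg (by omega), if_neg (by omega), if_pos (by omega),
    show 2*chaconH n + 1 + k - 2*chaconH n - 1 = k from by omega]

lemma L_succ_spacer (n : ℕ) :
    chaconL (n+1) (2*chaconH n) = (chaconH n : ℝ) * (3:ℝ)⁻¹ ^ n := by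
  have hh := H_pos n
  simp only [chaconL]
  rw [if_neg (by omega), if_neg (by omega), if_pos trivial]

lemma level_succ_cases {n k : ℕ} :
    (∃ p, p < chaconH n ∧ k = p) ∨ (∃ p, p < chaconH n ∧ k = chaconH n + p) ∨
    (∃ p, p < chaconH n ∧ k = 2*chaconH n + 1 + p) ∨
    ((chaconH n : ℝ) * (3:ℝ)⁻¹ ^ n ≤ chaconL (n+1) k) := by
  have hh := H_pos n
  by_cases h1 : k < chaconH n
  · exact Or.inl ⟨k, h1, rfl⟩
  by_cases h2 : k < 2*chaconH n
  · exact Or.inr (Or.inl ⟨k - chaconH n, by omega, by omega⟩)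
  by_cases h3 : k = 2*chaconH n
  · refine Or.inr (Or.inr (Or.inr ?_))
    subst h3; rw [L_succ_spacer]
  by_cases h4 : k ≤ 3*chaconH n
  · exact Or.inr (Or.inr (Or.inl ⟨k - 2*chaconH n - 1, by omega, by omega⟩))
  · refine Or.inr (Or.inr (Or.inr ?_))
    simp only [chaconL]
    rw [if_neg h1, if_neg h2, if_neg h3, if_neg h4]
    have hc : (3:ℝ)*(chaconH n : ℝ) ≤ (k : ℝ) := by
      exact_mod_cast (by omega : 3*chaconH n ≤ k)
    have hpos : (0:ℝ) ≤ ((k:ℝ) - 3*(chaconH n : ℝ)) * (3:ℝ)⁻¹ ^ (n+1) := by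
      apply mul_nonneg (by linarith) (by positivity)
    linarith

lemma level_succ_subset_lt {n k : ℕ} (h : k < chaconH n) :
    chaconLevel (n+1) k ⊆ chaconLevel n k := by
  intro x hx
  rw [mem_level] at hx ⊢
  rw [L_succ_lt h] at hx
  have h3 := pow_inv_succ n
  have hu : (0:ℝ) < (3:ℝ)⁻¹ ^ (n+1) := by positivity
  exact ⟨hx.1, by linarith [hx.2]⟩

lemma level_succ_subset_mid {n k : ℕ} (h : k < chaconH n) :
    chaconLevel (n+1) (chaconH n + k) ⊆ chaconLevel n k := by
  intro x hx
  rw [mem_level] at hx ⊢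
  rw [L_succ_mid h] at hx
  have h3 := pow_inv_succ n
  have hu : (0:ℝ) < (3:ℝ)⁻¹ ^ (n+1) := by positivity
  exact ⟨by linarith [hx.1], by linarith [hx.2]⟩

lemma level_succ_subset_third {n k : ℕ} (h : k < chaconH n) :
    chaconLevel (n+1) (2*chaconH n + 1 + k) ⊆ chaconLevel n k := by
  intro x hx
  rw [mem_level] at hx ⊢
  rw [L_succ_third h] at hx
  have h3 := pow_inv_succ n
  have hu : (0:ℝ) < (3:ℝ)⁻¹ ^ (n+1) := by positivity
  exact ⟨by linarith [hx.1], by linarith [hx.2]⟩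

lemma mem_level_succ_thirds {n j : ℕ} {x : ℝ} (hj : j < chaconH n) (hx : x ∈ chaconLevel n j) :
    x ∈ chaconLevel (n+1) j ∨ x ∈ chaconLevel (n+1) (chaconH n + j) ∨
    x ∈ chaconLevel (n+1) (2*chaconH n + 1 + j) := by
  rw [mem_level] at hx
  have h3 := pow_inv_succ n
  rcases lt_or_ge x (chaconL n j + (3:ℝ)⁻¹ ^ (n+1)) with h | h
  · left; rw [mem_level, L_succ_lt hj]; exact ⟨hx.1, h⟩
  rcases lt_or_ge x (chaconL n j + 2*(3:ℝ)⁻¹ ^ (n+1)) with h' | h'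
  · right; left; rw [mem_level, L_succ_mid hj]
    exact ⟨by linarith, by linarith⟩
  · right; right; rw [mem_level, L_succ_third hj]
    refine ⟨by linarith, by linarith [hx.2]⟩

lemma level_subset_of_mem {n m : ℕ} (hm : m < chaconH n) :
    ∀ ℓ, n ≤ ℓ → ∀ j, j < chaconH ℓ → ∀ x : ℝ, x ∈ chaconLevel ℓ j → x ∈ chaconLevel n m →
      chaconLevel ℓ j ⊆ chaconLevel n m := by
  intro ℓ hℓ
  induction ℓ, hℓ using Nat.le_induction with
  | base =>
    intro j hj x h1 h2
    have := level_unique hj hm h1 h2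
    subst this; exact subset_rfl
  | succ ℓ hle ih =>
    intro j hj x h1 h2
    have hh := H_pos ℓ
    have hH := H_succ ℓ
    rcases level_succ_cases (n := ℓ) (k := j) with ⟨p,hp,rfl⟩|⟨p,hp,rfl⟩|⟨p,hp,rfl⟩|hb
    · exact (level_succ_subset_lt hp).trans (ih j hp x (level_succ_subset_lt hp h1) h2)
    · exact (level_succ_subset_mid hp).trans (ih p hp x (level_succ_subset_mid hp h1) h2)
    · exact (level_succ_subset_third hp).trans (ih p hp x (level_succ_subset_third hp h1) h2)
    · exfalso
      have hxb := lt_tower_bound hm h2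
      have hg := tower_grow n ℓ hle
      have h11 := (mem_level.mp h1).1
      linarith

lemma step_up {n m : ℕ} (hm : m + 1 < chaconH n) :
    ∀ ℓ, n ≤ ℓ → ∀ j, j < chaconH ℓ → ∀ x : ℝ, x ∈ chaconLevel n m → x ∈ chaconLevel ℓ j →
      j + 1 < chaconH ℓ ∧ chaconL ℓ (j+1) - chaconL ℓ j = chaconL n (m+1) - chaconL n m := by
  intro ℓ hℓ
  induction ℓ, hℓ using Nat.le_induction with
  | base =>
    intro j hj x hxm hxj
    have := level_unique hj (by omega) hxj hxm
    subst this
    exact ⟨hm, rfl⟩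
  | succ ℓ hle ih =>
    intro j hj x hxm hxj
    have hH := H_succ ℓ
    have hh := H_pos ℓ
    rcases level_succ_cases (n := ℓ) (k := j) with ⟨p,hp,rfl⟩|⟨p,hp,rfl⟩|⟨p,hp,rfl⟩|hb
    · obtain ⟨hp1, hstep⟩ := ih j hp x hxm (level_succ_subset_lt hp hxj)
      refine ⟨by omega, ?_⟩
      rw [L_succ_lt hp, L_succ_lt hp1]
      exact hstep
    · obtain ⟨hp1, hstep⟩ := ih p hp x hxm (level_succ_subset_mid hp hxj)
      refine ⟨by omega, ?_⟩
      rw [show chaconH ℓ + p + 1 = chaconH ℓ + (p+1) from by omega, L_succ_mid hp1,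
        L_succ_mid hp]
      linarith
    · obtain ⟨hp1, hstep⟩ := ih p hp x hxm (level_succ_subset_third hp hxj)
      refine ⟨by omega, ?_⟩
      rw [show 2*chaconH ℓ + 1 + p + 1 = 2*chaconH ℓ + 1 + (p+1) from by omega,
        L_succ_third hp1, L_succ_third hp]
      linarith
    · exfalso
      have hxb := lt_tower_bound (by omega : m < chaconH n) hxm
      have hg := tower_grow n ℓ hle
      have h11 := (mem_level.mp hxj).1
      linarith

lemma step_wd {N J M K : ℕ} {x : ℝ} (hJ : J + 1 < chaconH N) (hK : K + 1 < chaconH M)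
    (h1 : x ∈ chaconLevel N J) (h2 : x ∈ chaconLevel M K) :
    chaconL N (J+1) - chaconL N J = chaconL M (K+1) - chaconL M K := by
  rcases le_total N M with h | h
  · exact ((step_up hJ M h K (by omega) x h1 h2).2).symm
  · exact (step_up hK N h J (by omega) x h2 h1).2

lemma chaconT0_eval {n m : ℕ} {x : ℝ} (hm : m + 1 < chaconH n) (hx : x ∈ chaconLevel n m) :
    chaconT0 x = x + (chaconL n (m+1) - chaconL n m) := by
  have hex : ∃ p : ℕ × ℕ, p.2 + 1 < chaconH p.1 ∧ x ∈ chaconLevel p.1 p.2 := ⟨(n, m), hm, hx⟩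
  unfold chaconT0
  rw [dif_pos hex]
  obtain ⟨hc1, hc2⟩ := hex.choose_spec
  have h := step_wd hc1 hm hc2 hx
  linarith

lemma chaconT_eval {n m : ℕ} (hm : m + 1 < chaconH n) {x : ChaconX}
    (hx : (x:ℝ) ∈ chaconLevel n m) :
    ((chaconT x : ChaconX) : ℝ) = (x:ℝ) + (chaconL n (m+1) - chaconL n m) := by
  have h0 := (mem_level.mp hx).1
  have h1 := L_nonneg n m
  have h2 := L_nonneg n (m+1)
  show max 0 (chaconT0 (x:ℝ)) = _
  rw [chaconT0_eval hm hx]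
  exact max_eq_right (by linarith)

lemma mem_level_translate {n J K : ℕ} {x : ℝ} (hx : x ∈ chaconLevel n J) :
    x - chaconL n J + chaconL n K ∈ chaconLevel n K := by
  rw [mem_level] at hx ⊢
  exact ⟨by linarith [hx.1], by linarith [hx.2]⟩

lemma iter_eval {N : ℕ} : ∀ (r J : ℕ), J + r < chaconH N → ∀ x : ChaconX,
    (x:ℝ) ∈ chaconLevel N J →
    ((chaconT^[r] x : ChaconX) : ℝ) = (x:ℝ) - chaconL N J + chaconL N (J + r) := by
  intro r
  induction r with
  | zero =>
    intro J _ x _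
    simp only [Function.iterate_zero_apply, Nat.add_zero]
    ring
  | succ r ih =>
    intro J hJ x hx
    rw [Function.iterate_succ_apply']
    have hval := ih J (by omega) x hx
    have hmem : ((chaconT^[r] x : ChaconX) : ℝ) ∈ chaconLevel N (J + r) := by
      rw [hval]; exact mem_level_translate hx
    have hev := chaconT_eval (n := N) (m := J + r) (by omega) hmem
    rw [hev, hval, show J + (r+1) = (J + r) + 1 from rfl]
    ring

lemma tn_cases {ℓ : ℕ} {x : ChaconX} (ht : chaconTn ℓ x = 1 ∨ chaconTn ℓ x = 2) :
    ∃ k, k < chaconH ℓ ∧ (x:ℝ) ∈ chaconLevel ℓ k ∧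
      ((x:ℝ) ∈ chaconLevel (ℓ+1) k ∨ (x:ℝ) ∈ chaconLevel (ℓ+1) (chaconH ℓ + k)) := by
  by_cases hex : ∃ k, k < chaconH ℓ ∧ (x:ℝ) ∈ chaconLevel ℓ k
  · unfold chaconTn at ht
    rw [dif_pos hex] at ht
    obtain ⟨hk, hxk⟩ := hex.choose_spec
    refine ⟨hex.choose, hk, hxk, ?_⟩
    have h0 := (mem_level.mp hxk).1
    have hp : (0:ℝ) < (3:ℝ) ^ (ℓ+1) := by positivity
    have hinv : (3:ℝ)⁻¹ ^ (ℓ+1) = ((3:ℝ) ^ (ℓ+1))⁻¹ := by rw [inv_pow]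
    have hy0 : 0 ≤ ((x:ℝ) - chaconL ℓ hex.choose) * (3:ℝ) ^ (ℓ+1) :=
      mul_nonneg (by linarith) (by positivity)
    have hfl0 : 0 ≤ ⌊((x:ℝ) - chaconL ℓ hex.choose) * (3:ℝ) ^ (ℓ+1)⌋ :=
      Int.floor_nonneg.mpr hy0
    rcases ht with ht | ht
    · have h1 : ⌊((x:ℝ) - chaconL ℓ hex.choose) * (3:ℝ) ^ (ℓ+1)⌋ = 0 := by omega
      have hlt1 := Int.lt_floor_add_one (((x:ℝ) - chaconL ℓ hex.choose) * (3:ℝ) ^ (ℓ+1))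
      rw [h1] at hlt1
      left
      rw [mem_level, L_succ_lt hk]
      refine ⟨h0, ?_⟩
      have : (x:ℝ) - chaconL ℓ hex.choose < (3:ℝ)⁻¹ ^ (ℓ+1) := by
        rw [hinv, show ((3:ℝ) ^ (ℓ+1))⁻¹ = 1 / (3:ℝ) ^ (ℓ+1) from by ring, lt_div_iff₀ hp]
        push_cast at hlt1
        linarith
      linarith
    · have h1 : ⌊((x:ℝ) - chaconL ℓ hex.choose) * (3:ℝ) ^ (ℓ+1)⌋ = 1 := by omega
      have hlt1 := Int.lt_floor_add_one (((x:ℝ) - chaconL ℓ hex.choose) * (3:ℝ) ^ (ℓ+1))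
      have hge1 := Int.floor_le (((x:ℝ) - chaconL ℓ hex.choose) * (3:ℝ) ^ (ℓ+1))
      rw [h1] at hlt1 hge1
      right
      rw [mem_level, L_succ_mid hk]
      constructor
      · have : (3:ℝ)⁻¹ ^ (ℓ+1) ≤ (x:ℝ) - chaconL ℓ hex.choose := by
          rw [hinv, show ((3:ℝ) ^ (ℓ+1))⁻¹ = 1 / (3:ℝ) ^ (ℓ+1) from by ring, div_le_iff₀ hp]
          push_cast at hge1
          linarith
        linarith
      · have : (x:ℝ) - chaconL ℓ hex.choose < 2 * (3:ℝ)⁻¹ ^ (ℓ+1) := by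
          rw [hinv, show (2:ℝ) * ((3:ℝ) ^ (ℓ+1))⁻¹ = 2 / (3:ℝ) ^ (ℓ+1) from by ring,
            lt_div_iff₀ hp]
          push_cast at hlt1
          linarith
        linarith
  · exfalso
    unfold chaconTn at ht
    rw [dif_neg hex] at ht
    rcases ht with h | h <;> simp at h

lemma key {n ℓ : ℕ} (hn : 2 ≤ n) (hℓ : n ≤ ℓ) (x : ChaconX)
    (hx : x ∈ chaconC (n-1)) (ht : chaconTn ℓ x = 1 ∨ chaconTn ℓ x = 2) :
    chaconT^[chaconH ℓ + 1] x ∈ chaconC n := by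
  obtain ⟨k₀, hk₀, hxk₀⟩ := hx
  set n' := n - 1 with hn'def
  have hnn : n = n' + 1 := by omega
  have h8 : 8 ≤ chaconH n' := H_ge8 (by omega)
  have hk₀h : k₀ < chaconH n' := by omega
  have hHn : chaconH n = 6 * chaconH n' + 2 := by rw [hnn, H_succ]; omega
  obtain ⟨m, hm1, hxm⟩ : ∃ m, m + 1 < chaconH n / 2 ∧ ((x:ℝ)) ∈ chaconLevel n m := by
    rcases mem_level_succ_thirds hk₀h hxk₀ with h | h | h
    · exact ⟨k₀, by omega, by rw [hnn]; exact h⟩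
    · exact ⟨chaconH n' + k₀, by omega, by rw [hnn]; exact h⟩
    · exact ⟨2*chaconH n' + 1 + k₀, by omega, by rw [hnn]; exact h⟩
  have hmh : m + 1 < chaconH n := by omega
  obtain ⟨k, hk, hxk, hcase⟩ := tn_cases ht
  have hHl := H_succ ℓ
  have h3 := pow_inv_succ ℓ
  have hu : (0:ℝ) < (3:ℝ)⁻¹ ^ (ℓ+1) := by positivity
  rcases hcase with hx1 | hx2
  · -- t = 1
    obtain ⟨hk1, hstep⟩ := step_up hmh ℓ hℓ k hk (x:ℝ) hxm hxk
    have hiter := iter_eval (N := ℓ+1) (chaconH ℓ + 1) k (by omega) x hx1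
    rw [show k + (chaconH ℓ + 1) = chaconH ℓ + (k+1) from by omega, L_succ_mid hk1,
      L_succ_lt hk] at hiter
    have hb0 := (mem_level.mp hxk).1
    have hb1 : (x:ℝ) < chaconL ℓ k + (3:ℝ)⁻¹ ^ (ℓ+1) := by
      have h := (mem_level.mp hx1).2
      rw [L_succ_lt hk] at h
      exact h
    have hw1 : (x:ℝ) - chaconL ℓ k + chaconL ℓ (k+1) ∈ chaconLevel ℓ (k+1) :=
      mem_level_translate hxk
    have hw2 : (x:ℝ) - chaconL ℓ k + chaconL ℓ (k+1) ∈ chaconLevel n (m+1) := by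
      have h := mem_level_translate (K := m+1) hxm
      rw [show (x:ℝ) - chaconL ℓ k + chaconL ℓ (k+1)
          = (x:ℝ) - chaconL n m + chaconL n (m+1) from by linarith]
      exact h
    have hsub := level_subset_of_mem hmh ℓ hℓ (k+1) hk1 _ hw1 hw2
    have hy : ((chaconT^[chaconH ℓ + 1] x : ChaconX) : ℝ) ∈ chaconLevel ℓ (k+1) := by
      rw [mem_level, hiter]
      have hw1' := mem_level.mp hw1
      exact ⟨by linarith [hw1'.1], by linarith⟩
    exact ⟨m+1, hm1, hsub hy⟩
  · -- t = 2
    have hiter := iter_eval (N := ℓ+1) (chaconH ℓ + 1) (chaconH ℓ + k) (by omega) x hx2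
    rw [show chaconH ℓ + k + (chaconH ℓ + 1) = 2*chaconH ℓ + 1 + k from by omega,
      L_succ_third hk, L_succ_mid hk] at hiter
    have hxm2 := mem_level.mp hx2
    rw [L_succ_mid hk] at hxm2
    have hy : ((chaconT^[chaconH ℓ + 1] x : ChaconX) : ℝ) ∈ chaconLevel ℓ k := by
      rw [mem_level, hiter]
      exact ⟨by linarith [hxm2.1], by linarith [hxm2.2]⟩
    have hsub := level_subset_of_mem (by omega : m < chaconH n) ℓ hℓ k hk (x:ℝ) hxk hxm
    exact ⟨m, by omega, hsub hy⟩

end ChaconAux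


/-- **Lemma.**  Let `n ≥ 2`, `x = (x₁,…,x_d) ∈ C_{n-1}ᵈ` and `ℓ ≥ n`.  If
`t_ℓ(xᵢ) ∈ {1,2}` for each `i`, then `(T^{×d})^{h_ℓ+1} x ∈ Cₙᵈ`. -/
theorem chacon_tn_lemma (d n ℓ : ℕ) (hn : 2 ≤ n) (hℓ : n ≤ ℓ)
    (x : Fin d → ChaconX) (hx : x ∈ chaconCd (Fin d) (n - 1))
    (ht : ∀ i, chaconTn ℓ (x i) = 1 ∨ chaconTn ℓ (x i) = 2) :
    chaconTdZ (Fin d) ((chaconH ℓ : ℤ) + 1) x ∈ chaconCd (Fin d) n := by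
  intro i
  have hxi := hx i
  have hti := ht i
  show chaconTZ ((chaconH ℓ : ℤ) + 1) (x i) ∈ chaconC n
  unfold chaconTZ
  rw [if_pos (by omega : (0:ℤ) ≤ (chaconH ℓ : ℤ) + 1),
    show ((chaconH ℓ : ℤ) + 1).toNat = chaconH ℓ + 1 from by omega]
  exact ChaconAux.key hn hℓ (x i) hxi hti
end

section
/- For every x ∈ X^d and every n ≥ 1: every n-crossing for x contains at most h_n/2 elements, and any two distinct n-crossings for the same x are separated by at least h_n/2 integers. -/
open MeasureTheory Set
open scoped ENNReal NNReal Classical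

section AuxChacon

lemma chaconH_succ (n : ℕ) : chaconH (n+1) = 2 * (3 * chaconH n + 1) := rfl

lemma chaconH_pos (n : ℕ) : 0 < chaconH n := by
  induction n with
  | zero => simp [chaconH]
  | succ n ih => rw [chaconH_succ]; omega

lemma pow3_pos (n : ℕ) : (0:ℝ) < (3:ℝ)⁻¹ ^ n := by positivity

lemma pow3_succ (n : ℕ) : (3:ℝ)⁻¹ ^ n = 3 * (3:ℝ)⁻¹ ^ (n+1) := by
  rw [pow_succ]
  rw [mul_comm (3:ℝ), mul_assoc]
  norm_num

lemma chaconL_eval (n k : ℕ) : chaconL (n+1) k =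
    if k < chaconH n then chaconL n k
    else if k < 2 * chaconH n then chaconL n (k - chaconH n) + (3 : ℝ)⁻¹ ^ (n + 1)
    else if k = 2 * chaconH n then (chaconH n : ℝ) * (3 : ℝ)⁻¹ ^ n
    else if k ≤ 3 * chaconH n then
      chaconL n (k - 2 * chaconH n - 1) + 2 * (3 : ℝ)⁻¹ ^ (n + 1)
    else (chaconH n : ℝ) * (3 : ℝ)⁻¹ ^ n
      + ((k : ℝ) - 3 * (chaconH n : ℝ)) * (3 : ℝ)⁻¹ ^ (n + 1) := rfl

lemma L_copy1 {n k : ℕ} (h : k < chaconH n) : chaconL (n+1) k = chaconL n k := by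
  rw [chaconL_eval, if_pos h]

lemma L_copy2 {n k : ℕ} (h : k < chaconH n) :
    chaconL (n+1) (k + chaconH n) = chaconL n k + (3:ℝ)⁻¹ ^ (n+1) := by
  rw [chaconL_eval, if_neg (by omega), if_pos (by omega)]
  congr 2
  omega

lemma L_copy3 {n k : ℕ} (h : k < chaconH n) :
    chaconL (n+1) (k + 2 * chaconH n + 1) = chaconL n k + 2 * (3:ℝ)⁻¹ ^ (n+1) := by
  rw [chaconL_eval, if_neg (by omega), if_neg (by omega), if_neg (by omega),
    if_pos (by omega)]
  congr 2
  omega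

lemma L_mid (n : ℕ) : chaconL (n+1) (2 * chaconH n) = (chaconH n : ℝ) * (3:ℝ)⁻¹ ^ n := by
  have := chaconH_pos n
  rw [chaconL_eval, if_neg (by omega), if_neg (by omega), if_pos rfl]

lemma L_top {n k : ℕ} (h : 3 * chaconH n < k) :
    chaconL (n+1) k = (chaconH n : ℝ) * (3:ℝ)⁻¹ ^ n
      + ((k : ℝ) - 3 * (chaconH n : ℝ)) * (3 : ℝ)⁻¹ ^ (n + 1) := by
  have := chaconH_pos n
  rw [chaconL_eval, if_neg (by omega), if_neg (by omega), if_neg (by omega),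
    if_neg (by omega)]

lemma chaconL_zero (n : ℕ) : chaconL n 0 = 0 := by
  induction n with
  | zero => rfl
  | succ n ih => rw [L_copy1 (chaconH_pos n), ih]

lemma chaconL_nonneg (n k : ℕ) : 0 ≤ chaconL n k := by
  induction n generalizing k with
  | zero => exact le_refl 0
  | succ n ih =>
    have hP := pow3_pos n
    have hu := pow3_pos (n+1)
    have hH := chaconH_pos n
    rw [chaconL_eval]
    split_ifs with h1 h2 h3 h4
    · exact ih k
    · have := ih (k - chaconH n); linarith
    · positivity
    · have := ih (k - 2 * chaconH n - 1); linarith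
    · have : (3 * chaconH n : ℝ) < (k:ℝ) := by exact_mod_cast (by omega : 3 * chaconH n < k)
      have hp : (0:ℝ) ≤ (chaconH n : ℝ) * (3:ℝ)⁻¹ ^ n := by positivity
      nlinarith

lemma chaconL_add_le {n k : ℕ} (h : k < chaconH n) :
    chaconL n k + (3:ℝ)⁻¹ ^ n ≤ (chaconH n : ℝ) * (3:ℝ)⁻¹ ^ n := by
  induction n generalizing k with
  | zero =>
    have h0 : chaconH 0 = 1 := rfl
    have hk : k = 0 := by omega
    subst hk
    rw [chaconL_zero, h0]
    norm_num
  | succ n ih =>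
    have hP3 := pow3_succ n
    have hu := pow3_pos (n+1)
    have hH := chaconH_pos n
    have hHc : (0:ℝ) < (chaconH n : ℝ) := by exact_mod_cast hH
    have hHs : ((chaconH (n+1) : ℕ) : ℝ) = 6 * (chaconH n : ℝ) + 2 := by
      rw [chaconH_succ]; push_cast; ring
    rw [chaconL_eval]
    split_ifs with h1 h2 h3 h4
    · have := ih h1; rw [hHs]; nlinarith
    · have h' : k - chaconH n < chaconH n := by omega
      have := ih h'; rw [hHs]; nlinarith
    · rw [hHs]; nlinarith
    · have h' : k - 2 * chaconH n - 1 < chaconH n := by omega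
      have := ih h'; rw [hHs]; nlinarith
    · have hkn : k ≤ 6 * chaconH n + 1 := by
        have : k < chaconH (n+1) := h
        rw [chaconH_succ] at this
        omega
      have hk2 : (k:ℝ) ≤ 6 * (chaconH n : ℝ) + 1 := by exact_mod_cast hkn
      have := mul_le_mul_of_nonneg_right hk2 hu.le
      rw [hHs]; nlinarith

lemma mem_level_iff {n k : ℕ} {x : ℝ} :
    x ∈ chaconLevel n k ↔ chaconL n k ≤ x ∧ x < chaconL n k + (3:ℝ)⁻¹ ^ n := Iff.rfl

lemma zero_mem_level (n : ℕ) : (0:ℝ) ∈ chaconLevel n 0 := by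
  rw [mem_level_iff, chaconL_zero]
  exact ⟨le_refl 0, by simpa using pow3_pos n⟩

end AuxChacon

section AuxChacon2

lemma L_mid' (n : ℕ) :
    chaconL (n+1) (2 * chaconH n) = ((3 * chaconH n : ℕ) : ℝ) * (3:ℝ)⁻¹ ^ (n+1) := by
  rw [L_mid, pow3_succ n]; push_cast; ring

lemma L_top' {n K : ℕ} (h : 3 * chaconH n < K) :
    chaconL (n+1) K = (K : ℝ) * (3:ℝ)⁻¹ ^ (n+1) := by
  rw [L_top h, pow3_succ n]; ring

/-- classification of a level of tower `n+1` w.r.t. tower `n`. -/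
lemma lev_cases {n K : ℕ} (hK : K < chaconH (n+1)) {x : ℝ}
    (hx : x ∈ chaconLevel (n+1) K) :
    (∃ c t, c < chaconH n ∧ t < 3 ∧
      (K = c + t * chaconH n + if t = 2 then 1 else 0) ∧
      chaconL n c + (t:ℝ) * (3:ℝ)⁻¹ ^ (n+1) ≤ x ∧
      x < chaconL n c + (t:ℝ) * (3:ℝ)⁻¹ ^ (n+1) + (3:ℝ)⁻¹ ^ (n+1)) ∨
    (∃ s : ℕ, ((s = 0 ∧ K = 2 * chaconH n) ∨ (1 ≤ s ∧ K = 3 * chaconH n + s)) ∧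
      ((3 * chaconH n + s : ℕ) : ℝ) * (3:ℝ)⁻¹ ^ (n+1) ≤ x ∧
      x < ((3 * chaconH n + s : ℕ) : ℝ) * (3:ℝ)⁻¹ ^ (n+1) + (3:ℝ)⁻¹ ^ (n+1)) := by
  have hH := chaconH_pos n
  have hsucc : chaconH (n+1) = 2 * (3 * chaconH n + 1) := chaconH_succ n
  obtain ⟨hx1, hx2⟩ := hx
  have hclass : K < chaconH n ∨ (chaconH n ≤ K ∧ K < 2 * chaconH n) ∨
      K = 2 * chaconH n ∨ (2 * chaconH n + 1 ≤ K ∧ K ≤ 3 * chaconH n) ∨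
      3 * chaconH n < K := by omega
  rcases hclass with h | hcc | h | hcc | h
  · left
    rw [L_copy1 h] at hx1 hx2
    exact ⟨K, 0, h, by omega, by simp, by push_cast; linarith, by push_cast; linarith⟩
  · obtain ⟨c, rfl⟩ : ∃ c, K = c + chaconH n := ⟨K - chaconH n, by omega⟩
    have hc : c < chaconH n := by omega
    left
    rw [L_copy2 hc] at hx1 hx2
    exact ⟨c, 1, hc, by omega, by simp, by push_cast; linarith, by push_cast; linarith⟩
  · subst h
    rw [L_mid' n] at hx1 hx2
    exact Or.inr ⟨0, Or.inl ⟨rfl, rfl⟩, by simpa using hx1, by simpa using hx2⟩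
  · obtain ⟨c, rfl⟩ : ∃ c, K = c + 2 * chaconH n + 1 := ⟨K - 2 * chaconH n - 1, by omega⟩
    have hc : c < chaconH n := by omega
    left
    rw [L_copy3 hc] at hx1 hx2
    exact ⟨c, 2, hc, by omega, by simp, by push_cast; linarith, by push_cast; linarith⟩
  · right
    rw [L_top' h] at hx1 hx2
    have hc : ((3 * chaconH n + (K - 3 * chaconH n) : ℕ) : ℝ) = (K : ℝ) := by
      congr 1; omega
    exact ⟨K - 3 * chaconH n, Or.inr ⟨by omega, by omega⟩,
      by rw [hc]; exact hx1, by rw [hc]; exact hx2⟩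

/-- a copy-third is inside the corresponding level of tower `n`. -/
lemma third_mem_level {n c t : ℕ} {x : ℝ} (hc : c < chaconH n) (ht : t < 3)
    (h1 : chaconL n c + (t:ℝ) * (3:ℝ)⁻¹ ^ (n+1) ≤ x)
    (h2 : x < chaconL n c + (t:ℝ) * (3:ℝ)⁻¹ ^ (n+1) + (3:ℝ)⁻¹ ^ (n+1)) :
    x ∈ chaconLevel n c := by
  have hu := pow3_pos (n+1)
  have hP3 := pow3_succ n
  have htR : (t:ℝ) ≤ 2 := by exact_mod_cast (by omega : t ≤ 2)
  have ht0 : (0:ℝ) ≤ (t:ℝ) := Nat.cast_nonneg t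
  constructor
  · nlinarith
  · nlinarith

lemma lev_disjoint : ∀ n (k k' : ℕ) (x : ℝ), k < chaconH n → k' < chaconH n →
    x ∈ chaconLevel n k → x ∈ chaconLevel n k' → k = k' := by
  intro n
  induction n with
  | zero =>
    intro k k' x hk hk' _ _
    have h0 : chaconH 0 = 1 := rfl
    omega
  | succ n ih =>
    intro k k' x hk hk' hx hx'
    have hu := pow3_pos (n+1)
    rcases lev_cases hk hx with ⟨c, t, hc, ht, hkeq, hI1, hI2⟩ | ⟨s, hs, hI1, hI2⟩ <;>
      rcases lev_cases hk' hx' with ⟨c', t', hc', ht', hkeq', hI1', hI2'⟩ | ⟨s', hs', hI1', hI2'⟩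
    · -- copy copy
      have hxc : x ∈ chaconLevel n c := third_mem_level hc ht hI1 hI2
      have hxc' : x ∈ chaconLevel n c' := third_mem_level hc' ht' hI1' hI2'
      have hcc : c = c' := ih c c' x hc hc' hxc hxc'
      subst hcc
      have h1 : (t:ℝ) < (t':ℝ) + 1 := by nlinarith
      have h2 : (t':ℝ) < (t:ℝ) + 1 := by nlinarith
      have htt : t = t' := by
        have := (by exact_mod_cast h1 : t < t' + 1)
        have := (by exact_mod_cast h2 : t' < t + 1)
        omega
      subst htt
      rcases (by omega : t = 0 ∨ t = 1 ∨ t = 2) with rfl | rfl | rfl <;>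
        simp at hkeq hkeq' <;> omega
    · -- copy vs spacer
      exfalso
      have hxc : x ∈ chaconLevel n c := third_mem_level hc ht hI1 hI2
      have hb : x < (chaconH n : ℝ) * (3:ℝ)⁻¹ ^ n := lt_of_lt_of_le hxc.2 (chaconL_add_le hc)
      have hcast : ((3 * chaconH n + s' : ℕ) : ℝ) ≥ 3 * (chaconH n : ℝ) := by
        push_cast; linarith [Nat.cast_nonneg (α := ℝ) s']
      have hP3 := pow3_succ n
      nlinarith
    · -- spacer vs copy
      exfalso
      have hxc : x ∈ chaconLevel n c' := third_mem_level hc' ht' hI1' hI2'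
      have hb : x < (chaconH n : ℝ) * (3:ℝ)⁻¹ ^ n := lt_of_lt_of_le hxc.2 (chaconL_add_le hc')
      have hcast : ((3 * chaconH n + s : ℕ) : ℝ) ≥ 3 * (chaconH n : ℝ) := by
        push_cast; linarith [Nat.cast_nonneg (α := ℝ) s]
      have hP3 := pow3_succ n
      nlinarith
    · -- spacer spacer
      have h1 : ((3 * chaconH n + s : ℕ) : ℝ) < ((3 * chaconH n + s' : ℕ) : ℝ) + 1 := by
        nlinarith
      have h2 : ((3 * chaconH n + s' : ℕ) : ℝ) < ((3 * chaconH n + s : ℕ) : ℝ) + 1 := by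
        nlinarith
      have hss : s = s' := by
        have := (by exact_mod_cast h1 : 3 * chaconH n + s < 3 * chaconH n + s' + 1)
        have := (by exact_mod_cast h2 : 3 * chaconH n + s' < 3 * chaconH n + s + 1)
        omega
      omega

end AuxChacon2

section AuxChacon3

/-- the region filled by tower `n` grows with `n`. -/
lemma region_mono : ∀ {n m : ℕ}, n ≤ m →
    (chaconH n : ℝ) * (3:ℝ)⁻¹ ^ n ≤ (chaconH m : ℝ) * (3:ℝ)⁻¹ ^ m := by
  intro n m h
  induction m with
  | zero =>
    have : n = 0 := by omega
    subst this; exact le_refl _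
  | succ m ih =>
    rcases Nat.lt_or_ge n (m+1) with h' | h'
    · have hle := ih (by omega)
      refine hle.trans ?_
      have hP3 := pow3_succ m
      have hu := pow3_pos (m+1)
      have hHc : (1:ℝ) ≤ (chaconH m : ℝ) := by exact_mod_cast chaconH_pos m
      have hcast : ((chaconH (m+1) : ℕ) : ℝ) = 6 * (chaconH m : ℝ) + 2 := by
        rw [chaconH_succ]; push_cast; ring
      rw [hcast]; nlinarith
    · have : n = m + 1 := by omega
      subst this; exact le_refl _

lemma level_lt_region {n k : ℕ} (hk : k < chaconH n) {x : ℝ} (hx : x ∈ chaconLevel n k) :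
    x < (chaconH n : ℝ) * (3:ℝ)⁻¹ ^ n :=
  lt_of_lt_of_le hx.2 (chaconL_add_le hk)

/-- the top level of tower `m+1` lies above the region of tower `m`. -/
lemma top_spacer {m : ℕ} {x : ℝ} (hx : x ∈ chaconLevel (m+1) (chaconH (m+1) - 1)) :
    (chaconH m : ℝ) * (3:ℝ)⁻¹ ^ m ≤ x := by
  have hH := chaconH_pos m
  have h1 : 3 * chaconH m < chaconH (m+1) - 1 := by rw [chaconH_succ]; omega
  have := hx.1
  rw [L_top h1] at this
  have hu := pow3_pos (m+1)
  have hge : ((chaconH (m+1) - 1 : ℕ) : ℝ) - 3 * (chaconH m : ℝ) ≥ 0 := by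
    have : (3 * chaconH m : ℕ) ≤ chaconH (m+1) - 1 := by omega
    have := (Nat.cast_le (α := ℝ)).mpr this
    push_cast at this ⊢; linarith
  nlinarith

/-- the bottom level of tower `m` is inside the bottom level of tower `n ≤ m`. -/
lemma bot_subset {n m : ℕ} (h : n ≤ m) {x : ℝ} (hx : x ∈ chaconLevel m 0) :
    x ∈ chaconLevel n 0 := by
  obtain ⟨h1, h2⟩ := hx
  rw [chaconL_zero] at h1 h2
  rw [mem_level_iff, chaconL_zero]
  have := pow_le_pow_of_le_one (by norm_num : (0:ℝ) ≤ 3⁻¹) (by norm_num : (3:ℝ)⁻¹ ≤ 1) h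
  exact ⟨h1, by linarith⟩

lemma lev_split {n k : ℕ} (hk : k < chaconH n) {x : ℝ} (hx : x ∈ chaconLevel n k) :
    x ∈ chaconLevel (n+1) k ∨ x ∈ chaconLevel (n+1) (k + chaconH n) ∨
      x ∈ chaconLevel (n+1) (k + 2 * chaconH n + 1) := by
  obtain ⟨h1, h2⟩ := hx
  have hP3 := pow3_succ n
  rcases lt_or_ge x (chaconL n k + (3:ℝ)⁻¹ ^ (n+1)) with h | h
  · left; rw [mem_level_iff, L_copy1 hk]; exact ⟨h1, h⟩
  rcases lt_or_ge x (chaconL n k + 2 * (3:ℝ)⁻¹ ^ (n+1)) with h' | h'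
  · right; left; rw [mem_level_iff, L_copy2 hk]; exact ⟨h, by linarith⟩
  · right; right; rw [mem_level_iff, L_copy3 hk]; exact ⟨h', by linarith⟩

/-- key compatibility: displacements to the next level agree across towers. -/
lemma dispEq : ∀ (m n k K : ℕ) (x : ℝ), n ≤ m → k + 1 < chaconH n → K + 1 < chaconH m →
    x ∈ chaconLevel n k → x ∈ chaconLevel m K →
    chaconL m (K+1) - chaconL m K = chaconL n (k+1) - chaconL n k := by
  intro m
  induction m with
  | zero =>
    intro n k K x hnm hk hK _ _
    have h0 : chaconH 0 = 1 := rfl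
    omega
  | succ m ih =>
    intro n k K x hnm hk hK hxn hxK
    rcases Nat.lt_or_ge n (m+1) with hnm' | hnm'
    swap
    · -- n = m+1 : same tower
      have hn : n = m + 1 := by omega
      subst hn
      have := lev_disjoint (m+1) k K x (by omega) (by omega) hxn hxK
      subst this; rfl
    have hnm2 : n ≤ m := by omega
    have hH := chaconH_pos m
    rcases lev_cases (by omega) hxK with ⟨c, t, hc, ht, hkeq, hI1, hI2⟩ | ⟨s, hs, hI1, hI2⟩
    · -- copy level
      have hxc : x ∈ chaconLevel m c := third_mem_level hc ht hI1 hI2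
      have hc1 : c + 1 < chaconH m := by
        rcases Nat.lt_or_ge (c+1) (chaconH m) with h | h
        · exact h
        · exfalso
          have hceq : c = chaconH m - 1 := by omega
          rcases Nat.lt_or_ge n m with hlt | hge
          · -- n < m, so m ≥ 1 and top of tower m is a spacer
            obtain ⟨p, rfl⟩ : ∃ p, m = p + 1 := ⟨m - 1, by omega⟩
            have h1 := top_spacer (hceq ▸ hxc)
            have h2 := level_lt_region (by omega : k < chaconH n) hxn
            have h3 := region_mono (by omega : n ≤ p)
            linarith
          · -- n = m
            have hn : n = m := by omega
            subst hn
            have := lev_disjoint n k c x (by omega) hc hxn hxc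
            omega
      have hdisp : chaconL (m+1) (K+1) - chaconL (m+1) K
          = chaconL m (c+1) - chaconL m c := by
        rcases (by omega : t = 0 ∨ t = 1 ∨ t = 2) with rfl | rfl | rfl
        · have hKc : K = c := by simp at hkeq; omega
          subst hKc
          rw [L_copy1 hc, L_copy1 hc1]
        · have hKc : K = c + chaconH m := by simp at hkeq; omega
          subst hKc
          have e1 : c + chaconH m + 1 = (c+1) + chaconH m := by omega
          rw [e1, L_copy2 hc, L_copy2 hc1]
          ring
        · have hKc : K = c + 2 * chaconH m + 1 := by simp at hkeq; omega
          subst hKc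
          have e1 : c + 2 * chaconH m + 1 + 1 = (c+1) + 2 * chaconH m + 1 := by omega
          rw [e1, L_copy3 hc, L_copy3 hc1]
          ring
      rw [hdisp]
      exact ih n k c x hnm2 hk hc1 hxn hxc
    · -- spacer: impossible, x lies in the region of tower n ⊆ tower m
      exfalso
      have h2 := level_lt_region (by omega : k < chaconH n) hxn
      have h3 := region_mono hnm2
      have hcast : ((3 * chaconH m + s : ℕ) : ℝ) ≥ 3 * (chaconH m : ℝ) := by
        push_cast; linarith [Nat.cast_nonneg (α := ℝ) s]
      have hP3 := pow3_succ m
      have hu := pow3_pos (m+1)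
      nlinarith

/-- key compatibility, backward version. -/
lemma dispEq' : ∀ (m n k K : ℕ) (x : ℝ), n ≤ m → k + 1 < chaconH n → K + 1 < chaconH m →
    x ∈ chaconLevel n (k+1) → x ∈ chaconLevel m (K+1) →
    chaconL m (K+1) - chaconL m K = chaconL n (k+1) - chaconL n k := by
  intro m
  induction m with
  | zero =>
    intro n k K x hnm hk hK _ _
    have h0 : chaconH 0 = 1 := rfl
    omega
  | succ m ih =>
    intro n k K x hnm hk hK hxn hxK
    rcases Nat.lt_or_ge n (m+1) with hnm' | hnm'
    swap
    · have hn : n = m + 1 := by omega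
      subst hn
      have := lev_disjoint (m+1) (k+1) (K+1) x (by omega) (by omega) hxn hxK
      have : k = K := by omega
      subst this; rfl
    have hnm2 : n ≤ m := by omega
    have hH := chaconH_pos m
    rcases lev_cases (by omega : K + 1 < chaconH (m+1)) hxK with
      ⟨c, t, hc, ht, hkeq, hI1, hI2⟩ | ⟨s, hs, hI1, hI2⟩
    · have hxc : x ∈ chaconLevel m c := third_mem_level hc ht hI1 hI2
      have hc1 : 1 ≤ c := by
        rcases Nat.eq_zero_or_pos c with h | h
        · exfalso
          subst h
          have hx0 : x ∈ chaconLevel n 0 := bot_subset hnm2 hxc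
          have := lev_disjoint n (k+1) 0 x (by omega) (chaconH_pos n) hxn hx0
          omega
        · exact h
      obtain ⟨c', rfl⟩ : ∃ c', c = c' + 1 := ⟨c - 1, by omega⟩
      have hc' : c' + 1 < chaconH m := hc
      have hdisp : chaconL (m+1) (K+1) - chaconL (m+1) K
          = chaconL m (c'+1) - chaconL m c' := by
        rcases (by omega : t = 0 ∨ t = 1 ∨ t = 2) with rfl | rfl | rfl
        · have hKc : K = c' := by simp at hkeq; omega
          rw [hKc]
          rw [L_copy1 hc', L_copy1 (by omega : c' < chaconH m)]
        · have hKc : K = c' + chaconH m := by simp at hkeq; omega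
          rw [hKc]
          have e1 : c' + chaconH m + 1 = (c'+1) + chaconH m := by omega
          rw [e1, L_copy2 hc', L_copy2 (by omega : c' < chaconH m)]
          ring
        · have hKc : K = c' + 2 * chaconH m + 1 := by simp at hkeq; omega
          rw [hKc]
          have e1 : c' + 2 * chaconH m + 1 + 1 = (c'+1) + 2 * chaconH m + 1 := by omega
          rw [e1, L_copy3 hc', L_copy3 (by omega : c' < chaconH m)]
          ring
      rw [hdisp]
      exact ih n k c' x hnm2 hk hc' hxn hxc
    · exfalso
      have h2 := level_lt_region (by omega : k + 1 < chaconH n) hxn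
      have h3 := region_mono hnm2
      have hcast : ((3 * chaconH m + s : ℕ) : ℝ) ≥ 3 * (chaconH m : ℝ) := by
        push_cast; linarith [Nat.cast_nonneg (α := ℝ) s]
      have hP3 := pow3_succ m
      have hu := pow3_pos (m+1)
      nlinarith

end AuxChacon3

section AuxChacon4

/-- applying `T` to a point of a non-top level. -/
lemma chaconT_coe (y : ChaconX) (n k : ℕ) (hk : k + 1 < chaconH n)
    (hy : (y : ℝ) ∈ chaconLevel n k) :
    ((chaconT y : ChaconX) : ℝ) = (y : ℝ) - chaconL n k + chaconL n (k+1) := by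
  have hex : ∃ p : ℕ × ℕ, p.2 + 1 < chaconH p.1 ∧ (y:ℝ) ∈ chaconLevel p.1 p.2 :=
    ⟨(n, k), hk, hy⟩
  have hT0 : chaconT0 (y:ℝ) = (y:ℝ) - chaconL hex.choose.1 hex.choose.2
      + chaconL hex.choose.1 (hex.choose.2 + 1) := by
    simp only [chaconT0]
    rw [dif_pos hex]
  obtain ⟨hm1, hm2⟩ := hex.choose_spec
  have hdisp : chaconL hex.choose.1 (hex.choose.2 + 1) - chaconL hex.choose.1 hex.choose.2
      = chaconL n (k+1) - chaconL n k := by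
    rcases le_total n hex.choose.1 with h | h
    · exact dispEq hex.choose.1 n k hex.choose.2 (y:ℝ) h hk hm1 hy hm2
    · have := dispEq n hex.choose.1 hex.choose.2 k (y:ℝ) h hm1 hk hm2 hy
      linarith
  have h0 : 0 ≤ chaconT0 (y:ℝ) := by
    rw [hT0]
    have := hm2.1
    have := chaconL_nonneg hex.choose.1 (hex.choose.2 + 1)
    linarith
  have : ((chaconT y : ChaconX) : ℝ) = max 0 (chaconT0 (y:ℝ)) := rfl
  rw [this, max_eq_right h0, hT0]
  linarith

lemma chaconT_mem (y : ChaconX) (n k : ℕ) (hk : k + 1 < chaconH n)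
    (hy : (y : ℝ) ∈ chaconLevel n k) :
    ((chaconT y : ChaconX) : ℝ) ∈ chaconLevel n (k+1) := by
  rw [chaconT_coe y n k hk hy]
  obtain ⟨h1, h2⟩ := hy
  exact ⟨by linarith, by linarith⟩

lemma zero_no_pred (z : ℝ) (hz : z = 0) :
    ¬ ∃ p : ℕ × ℕ, p.2 + 1 < chaconH p.1 ∧ z ∈ chaconLevel p.1 (p.2 + 1) := by
  rintro ⟨⟨m, K⟩, hK, hmem⟩
  rw [hz] at hmem
  have h0 : (0:ℝ) ∈ chaconLevel m 0 := zero_mem_level m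
  have := lev_disjoint m (K+1) 0 0 hK (chaconH_pos m) hmem h0
  omega

lemma chaconTinv_coe_zero (z : ChaconX) (hz : (z:ℝ) = 0) :
    ((chaconTinv z : ChaconX) : ℝ) = 0 := by
  have hex := zero_no_pred (z:ℝ) hz
  have hT0 : chaconT0inv (z:ℝ) = (z:ℝ) := by
    simp only [chaconT0inv]
    rw [dif_neg hex]
  have : ((chaconTinv z : ChaconX) : ℝ) = max 0 (chaconT0inv (z:ℝ)) := rfl
  rw [this, hT0, hz, max_self]

/-- structure of `T⁻¹ z` when it lies in a non-top level. -/
lemma chaconTinv_level (z : ChaconX) (n k : ℕ) (hk : k + 1 < chaconH n)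
    (hw : ((chaconTinv z : ChaconX) : ℝ) ∈ chaconLevel n k) :
    (z : ℝ) ∈ chaconLevel n (k+1) ∨
      ((¬ ∃ p : ℕ × ℕ, p.2 + 1 < chaconH p.1 ∧ (z:ℝ) ∈ chaconLevel p.1 (p.2+1)) ∧
        ((chaconTinv z : ChaconX) : ℝ) = (z:ℝ)) := by
  have hcoe : ((chaconTinv z : ChaconX) : ℝ) = max 0 (chaconT0inv (z:ℝ)) := rfl
  by_cases hex : ∃ p : ℕ × ℕ, p.2 + 1 < chaconH p.1 ∧ (z:ℝ) ∈ chaconLevel p.1 (p.2+1)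
  · left
    have hT0 : chaconT0inv (z:ℝ) = (z:ℝ) - chaconL hex.choose.1 (hex.choose.2 + 1)
        + chaconL hex.choose.1 hex.choose.2 := by
      simp only [chaconT0inv]
      rw [dif_pos hex]
    obtain ⟨hm1, hm2⟩ := hex.choose_spec
    have h0 : 0 ≤ chaconT0inv (z:ℝ) := by
      rw [hT0]
      have := hm2.1
      have := chaconL_nonneg hex.choose.1 hex.choose.2
      linarith
    have hwcoe : ((chaconTinv z : ChaconX) : ℝ) = chaconT0inv (z:ℝ) := by
      rw [hcoe, max_eq_right h0]
    have hwm : ((chaconTinv z : ChaconX) : ℝ) ∈ chaconLevel hex.choose.1 hex.choose.2 := by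
      rw [hwcoe, hT0]
      obtain ⟨h1, h2⟩ := hm2
      exact ⟨by linarith, by linarith⟩
    have h1 := chaconT_coe (chaconTinv z) hex.choose.1 hex.choose.2 hm1 hwm
    have h2 := chaconT_mem (chaconTinv z) n k hk hw
    have hz : ((chaconT (chaconTinv z) : ChaconX) : ℝ) = (z:ℝ) := by
      rw [h1, hwcoe, hT0]; ring
    rw [hz] at h2
    exact h2
  · right
    have hT0 : chaconT0inv (z:ℝ) = (z:ℝ) := by
      simp only [chaconT0inv]
      rw [dif_neg hex]
    exact ⟨hex, by rw [hcoe, hT0, max_eq_right z.2]⟩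

/-- any positive point of a tower level lies in some non-bottom level of some tower. -/
lemma exists_pred_pair : ∀ (t n κ : ℕ) (x : ℝ), κ < chaconH n → x ∈ chaconLevel n κ →
    (3:ℝ)⁻¹ ^ (n+t) ≤ x →
    ∃ p : ℕ × ℕ, p.2 + 1 < chaconH p.1 ∧ x ∈ chaconLevel p.1 (p.2 + 1) := by
  intro t
  induction t with
  | zero =>
    intro n κ x hκ hx hge
    match κ, hκ with
    | 0, _ =>
      exfalso
      have h2 := hx.2
      rw [chaconL_zero] at h2
      simp at h2 hge
      linarith
    | κ+1, hκ => exact ⟨(n, κ), hκ, hx⟩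
  | succ t ih =>
    intro n κ x hκ hx hge
    match κ, hκ with
    | κ+1, hκ => exact ⟨(n, κ), hκ, hx⟩
    | 0, hκ =>
      have hH := chaconH_pos n
      have hsucc := chaconH_succ n
      rcases lev_split hκ hx with h1 | h2 | h3
      · exact ih (n+1) 0 x (chaconH_pos (n+1)) h1
          (by rw [show (n+1)+t = n+(t+1) from by omega] at *; exact hge)
      · refine ⟨(n+1, chaconH n - 1), by show chaconH n - 1 + 1 < chaconH (n+1); omega, ?_⟩
        rw [show chaconH n - 1 + 1 = 0 + chaconH n from by omega]
        exact h2
      · refine ⟨(n+1, 2 * chaconH n), by show 2 * chaconH n + 1 < chaconH (n+1); omega, ?_⟩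
        rw [show 2 * chaconH n + 1 = 0 + 2 * chaconH n + 1 from by omega]
        exact h3

lemma exists_pred_pair' {x : ℝ} (hx : 0 < x) {n κ : ℕ} (hκ : κ < chaconH n)
    (hmem : x ∈ chaconLevel n κ) :
    ∃ p : ℕ × ℕ, p.2 + 1 < chaconH p.1 ∧ x ∈ chaconLevel p.1 (p.2 + 1) := by
  obtain ⟨m, hm⟩ := exists_pow_lt_of_lt_one hx (by norm_num : (3:ℝ)⁻¹ < 1)
  refine exists_pred_pair m n κ x hκ hmem ?_
  calc (3:ℝ)⁻¹ ^ (n+m) ≤ (3:ℝ)⁻¹ ^ m :=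
        pow_le_pow_of_le_one (by norm_num) (by norm_num) (by omega)
    _ ≤ x := hm.le

lemma chaconTZ_succ (j : ℤ) (hj : 0 ≤ j) (x : ChaconX) :
    chaconTZ (j+1) x = chaconT (chaconTZ j x) := by
  unfold chaconTZ
  rw [if_pos hj, if_pos (by omega : (0:ℤ) ≤ j + 1)]
  rw [show (j+1).toNat = j.toNat + 1 from by omega, Function.iterate_succ_apply']

lemma chaconTZ_pred (j : ℤ) (hj : j ≤ 0) (x : ChaconX) :
    chaconTZ (j-1) x = chaconTinv (chaconTZ j x) := by
  unfold chaconTZ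
  rcases eq_or_lt_of_le hj with h0 | hneg
  · subst h0
    rw [if_pos le_rfl, if_neg (by omega : ¬ (0:ℤ) ≤ 0 - 1)]
    simp
  · rw [if_neg (by omega : ¬ (0:ℤ) ≤ j), if_neg (by omega : ¬ (0:ℤ) ≤ j - 1)]
    rw [show (-(j-1)).toNat = (-j).toNat + 1 from by omega, Function.iterate_succ_apply']

end AuxChacon4

section AuxChacon5

lemma mem_chaconC {y : ChaconX} {n : ℕ} :
    y ∈ chaconC n ↔ ∃ k, k < chaconH n / 2 ∧ (y:ℝ) ∈ chaconLevel n k := Iff.rfl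

lemma mem_chaconCd {ι : Type} {y : ι → ChaconX} {n : ℕ} :
    y ∈ chaconCd ι n ↔ ∀ i, y i ∈ chaconC n := Iff.rfl

lemma coe_nonneg (y : ChaconX) : (0:ℝ) ≤ (y : ℝ) := y.2

end AuxChacon5

/-- **Lemma (crossings are short and separated).**  For every `x ∈ X^d` and `n ≥ 1`:
an `n`-crossing contains at most `hₙ/2` elements, and two distinct `n`-crossings for the
same `x` are separated by at least `hₙ/2` integers. -/
theorem chacon_crossings_separated (d n : ℕ) (hn : 1 ≤ n) (x : Fin d → ChaconX) :
    (∀ a b : ℤ, IsCrossing (Fin d) n x a b → b - a + 1 ≤ ((chaconH n / 2 : ℕ) : ℤ)) ∧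
    (∀ a b a' b' : ℤ, IsCrossing (Fin d) n x a b → IsCrossing (Fin d) n x a' b' →
      b < a' → ((chaconH n / 2 : ℕ) : ℤ) ≤ a' - b - 1) := by
  obtain ⟨m, rfl⟩ : ∃ m, n = m + 1 := ⟨n - 1, by omega⟩
  have hsHn : chaconH (m+1) = 2 * (3 * chaconH m + 1) := chaconH_succ m
  have hHm := chaconH_pos m
  have h2eq : 2 * (chaconH (m+1) / 2) = chaconH (m+1) := by omega
  have h2pos : 1 ≤ chaconH (m+1) / 2 := by omega
  constructor
  · -- Part 1: crossings are short
    intro a b hc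
    obtain ⟨hab, hin, hleft, _⟩ := hc
    rw [mem_chaconCd] at hleft
    push_neg at hleft
    obtain ⟨i₀, hi₀⟩ := hleft
    have hi₀' : chaconTZ (a-1) (x i₀) ∉ chaconC (m+1) := hi₀
    have hmem : ∀ j : ℤ, a ≤ j → j ≤ b → ∃ k, k < chaconH (m+1) / 2 ∧
        ((chaconTZ j (x i₀) : ChaconX) : ℝ) ∈ chaconLevel (m+1) k := by
      intro j h1 h2
      exact mem_chaconC.mp (mem_chaconCd.mp (hin j h1 h2) i₀)
    obtain ⟨k₀, hk₀, hm₀⟩ := hmem a le_rfl hab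
    have key : ∀ t : ℕ, a + (t:ℤ) ≤ b → k₀ + t < chaconH (m+1) / 2 ∧
        ((chaconTZ (a + (t:ℤ)) (x i₀) : ChaconX) : ℝ) ∈ chaconLevel (m+1) (k₀ + t) := by
      intro t
      induction t with
      | zero => intro _; simpa using ⟨hk₀, hm₀⟩
      | succ t ih =>
        intro hle
        have hle1 : a + (t:ℤ) + 1 ≤ b := by push_cast at hle; omega
        have hle' : a + (t:ℤ) ≤ b := by omega
        obtain ⟨hlt, hmemt⟩ := ih hle'
        have hkn : k₀ + t + 1 < chaconH (m+1) := by omega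
        obtain ⟨k', hk', hm'⟩ := hmem (a + (t:ℤ) + 1) (by omega) hle1
        have hgoalmem : ((chaconTZ (a + (t:ℤ) + 1) (x i₀) : ChaconX) : ℝ)
            ∈ chaconLevel (m+1) (k₀ + t + 1) := by
          rcases le_or_gt 0 (a + (t:ℤ)) with hpos | hneg
          · rw [chaconTZ_succ _ hpos]
            exact chaconT_mem _ _ _ hkn hmemt
          · have hrel : chaconTZ (a + (t:ℤ)) (x i₀)
                = chaconTinv (chaconTZ (a + (t:ℤ) + 1) (x i₀)) := by
              have h := chaconTZ_pred (a + (t:ℤ) + 1) (by omega) (x i₀)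
              rw [show a + (t:ℤ) + 1 - 1 = a + (t:ℤ) from by ring] at h
              exact h
            have hwmem : ((chaconTinv (chaconTZ (a + (t:ℤ) + 1) (x i₀)) : ChaconX) : ℝ)
                ∈ chaconLevel (m+1) (k₀ + t) := by rw [← hrel]; exact hmemt
            rcases chaconTinv_level _ _ _ hkn hwmem with hgood | ⟨hnex, heq⟩
            · exact hgood
            · exfalso
              have hz0 : ((chaconTZ (a + (t:ℤ) + 1) (x i₀) : ChaconX) : ℝ) = 0 := by
                by_contra h
                have hpos' : 0 < ((chaconTZ (a + (t:ℤ) + 1) (x i₀) : ChaconX) : ℝ) :=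
                  lt_of_le_of_ne (coe_nonneg _) (Ne.symm h)
                exact hnex (exists_pred_pair' hpos' (by omega : k' < chaconH (m+1)) hm')
              have hdown : ∀ s : ℕ,
                  ((chaconTZ (a + (t:ℤ) + 1 - (s:ℤ)) (x i₀) : ChaconX) : ℝ) = 0 := by
                intro s
                induction s with
                | zero => simpa using hz0
                | succ s ihs =>
                  have hr := chaconTZ_pred (a + (t:ℤ) + 1 - (s:ℤ)) (by omega) (x i₀)
                  rw [show a + (t:ℤ) + 1 - (s:ℤ) - 1 = a + (t:ℤ) + 1 - ((s:ℤ)+1) from by ring]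
                    at hr
                  rw [show ((s+1 : ℕ):ℤ) = (s:ℤ) + 1 from by push_cast; ring, hr]
                  exact chaconTinv_coe_zero _ ihs
              have hfin := hdown (t + 2)
              rw [show a + (t:ℤ) + 1 - ((t+2 : ℕ):ℤ) = a - 1 from by push_cast; ring] at hfin
              apply hi₀'
              rw [mem_chaconC]
              exact ⟨0, h2pos, by rw [hfin]; exact zero_mem_level (m+1)⟩
        have hkk : k' = k₀ + t + 1 :=
          lev_disjoint (m+1) k' (k₀ + t + 1) _ (by omega) hkn hm' hgoalmem
        refine ⟨by omega, ?_⟩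
        rw [show ((t+1:ℕ):ℤ) = (t:ℤ) + 1 from by push_cast; ring,
          show a + ((t:ℤ) + 1) = a + (t:ℤ) + 1 from by ring]
        exact hgoalmem
    have hfin := (key (b - a).toNat (by omega)).1
    omega
  · -- Part 2: crossings are separated
    intro a b a' b' hc hc' hba'
    obtain ⟨hab, hin, _, hrgt⟩ := hc
    obtain ⟨hab', hin', _, _⟩ := hc'
    rw [mem_chaconCd] at hrgt
    push_neg at hrgt
    obtain ⟨i₀, hi₀⟩ := hrgt
    have hi₀' : chaconTZ (b+1) (x i₀) ∉ chaconC (m+1) := hi₀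
    obtain ⟨k, hk, hmk⟩ := mem_chaconC.mp (mem_chaconCd.mp (hin b hab le_rfl) i₀)
    have hstep1 : ((chaconTZ (b+1) (x i₀) : ChaconX) : ℝ) ∈ chaconLevel (m+1) (k+1) := by
      have hkn : k + 1 < chaconH (m+1) := by omega
      rcases le_or_gt 0 b with hpos | hneg
      · rw [chaconTZ_succ _ hpos]; exact chaconT_mem _ _ _ hkn hmk
      · have hrel : chaconTZ b (x i₀) = chaconTinv (chaconTZ (b+1) (x i₀)) := by
          have h := chaconTZ_pred (b+1) (by omega) (x i₀)
          rw [show b + 1 - 1 = b from by ring] at h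
          exact h
        rcases chaconTinv_level _ _ _ hkn (by rw [← hrel]; exact hmk) with hgood | ⟨_, heq⟩
        · exact hgood
        · exfalso
          apply hi₀'
          rw [mem_chaconC]
          refine ⟨k, hk, ?_⟩
          rw [← heq, ← hrel]
          exact hmk
    have hkval : k = chaconH (m+1) / 2 - 1 := by
      by_contra hne
      have hlt2 : k + 1 < chaconH (m+1) / 2 := by omega
      exact hi₀' (mem_chaconC.mpr ⟨k+1, hlt2, hstep1⟩)
    have key2 : ∀ s : ℕ, 1 ≤ s → s ≤ chaconH (m+1) / 2 →
        ((chaconTZ (b + (s:ℤ)) (x i₀) : ChaconX) : ℝ) ∈ chaconLevel (m+1) (k + s) := by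
      intro s
      induction s with
      | zero => intro h _; omega
      | succ s ihs =>
        intro _ hle
        rcases Nat.eq_zero_or_pos s with rfl | hs1
        · simpa using hstep1
        · have hprev := ihs hs1 (by omega)
          have hkn : k + s + 1 < chaconH (m+1) := by omega
          have hglobal : ((chaconTZ (b + (s:ℤ) + 1) (x i₀) : ChaconX) : ℝ)
              ∈ chaconLevel (m+1) (k + s + 1) := by
            rcases le_or_gt 0 (b + (s:ℤ)) with hpos | hneg
            · rw [chaconTZ_succ _ hpos]
              exact chaconT_mem _ _ _ hkn hprev
            · have hrel : chaconTZ (b + (s:ℤ)) (x i₀)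
                  = chaconTinv (chaconTZ (b + (s:ℤ) + 1) (x i₀)) := by
                have h := chaconTZ_pred (b + (s:ℤ) + 1) (by omega) (x i₀)
                rw [show b + (s:ℤ) + 1 - 1 = b + (s:ℤ) from by ring] at h
                exact h
              rcases chaconTinv_level _ _ _ hkn
                  (by rw [← hrel]; exact hprev) with hgood | ⟨hnex, heq⟩
              · exact hgood
              · exfalso
                have hzmem : ((chaconTZ (b + (s:ℤ) + 1) (x i₀) : ChaconX) : ℝ)
                    ∈ chaconLevel (m+1) (k + s) := by
                  rw [← heq, ← hrel]; exact hprev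
                rcases eq_or_lt_of_le (coe_nonneg (chaconTZ (b + (s:ℤ) + 1) (x i₀)))
                    with h0 | hposz
                · have h00 : ((chaconTZ (b + (s:ℤ) + 1) (x i₀) : ChaconX) : ℝ) = 0 := h0.symm
                  rw [h00] at hzmem
                  have := lev_disjoint (m+1) (k+s) 0 0 (by omega) (by omega)
                    hzmem (zero_mem_level (m+1))
                  omega
                · exact hnex (exists_pred_pair' hposz (by omega : k + s < chaconH (m+1)) hzmem)
          rw [show ((s+1:ℕ):ℤ) = (s:ℤ) + 1 from by push_cast; ring,
            show b + ((s:ℤ) + 1) = b + (s:ℤ) + 1 from by ring]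
          exact hglobal
    by_contra hlt
    push_neg at hlt
    set s : ℕ := (a' - b).toNat with hs_def
    have hs1 : 1 ≤ s := by omega
    have hs2 : s ≤ chaconH (m+1) / 2 := by omega
    have hmem' := key2 s hs1 hs2
    obtain ⟨k'', hk'', hm''⟩ := mem_chaconC.mp (mem_chaconCd.mp (hin' a' le_rfl hab') i₀)
    rw [show b + (s:ℤ) = a' from by omega] at hmem'
    have := lev_disjoint (m+1) k'' (k + s) _ (by omega) (by omega) hm'' hmem'
    omega
end
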